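/- Fix an integer k ≥ 1 (for k = 1 the hypothesis forces the data to vanish). Let p₁ ∈ ℝ[x,y,z] have degree ≤ k−1 in x, ≤ k−2 in y, ≤ k−2 in z; let p₂ ∈ ℝ[x,y,z] have degree ≤ k−2 in x, ≤ k−1 in y, ≤ k−2 in z; and let ρ ∈ Q^{k−2,k−2}[x,y]. Define u : Ω∞° → ℝ³ by u(x,y,z) = (1+z)^{−(k+1)}·( y(1−y)z·p₁(x,y,z), x(1−x)z·p₂(x,y,z), x(1−x)y(1−y)·ρ(x,y) ). If curl u = 0 at every point of Ω∞°, then p₁ = 0, p₂ = 0 and ρ = 0. In other words, the curl operator is injective on the space U^{(1),k}_{0,curl}(Ω∞) of all functions of this form. -/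

import Mathlib

noncomputable section

/-- The interior `Ω∞° = (0,1) × (0,1) × (0,∞)` of the infinite pyramid. -/
def PyrInfInt : Set (ℝ × ℝ × ℝ) :=
  {p | 0 < p.1 ∧ p.1 < 1 ∧ 0 < p.2.1 ∧ p.2.1 < 1 ∧ 0 < p.2.2}

/-- Partial derivative in `x`. -/
def pdx (f : ℝ × ℝ × ℝ → ℝ) (p : ℝ × ℝ × ℝ) : ℝ := fderiv ℝ f p ((1 : ℝ), (0 : ℝ), (0 : ℝ))

/-- Partial derivative in `y`. -/
def pdy (f : ℝ × ℝ × ℝ → ℝ) (p : ℝ × ℝ × ℝ) : ℝ := fderiv ℝ f p ((0 : ℝ), (1 : ℝ), (0 : ℝ))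

/-- Partial derivative in `z`. -/
def pdz (f : ℝ × ℝ × ℝ → ℝ) (p : ℝ × ℝ × ℝ) : ℝ := fderiv ℝ f p ((0 : ℝ), (0 : ℝ), (1 : ℝ))

/-- The curl of a vector field `ℝ³ → ℝ³` at a point. -/
def curl3 (f : ℝ × ℝ × ℝ → ℝ × ℝ × ℝ) (p : ℝ × ℝ × ℝ) : ℝ × ℝ × ℝ :=
  (pdy (fun q => (f q).2.2) p - pdz (fun q => (f q).2.1) p,
   pdz (fun q => (f q).1) p - pdx (fun q => (f q).2.2) p,
   pdx (fun q => (f q).2.1) p - pdy (fun q => (f q).1) p)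

/-- The generic element of `U^{(1),k}_{0,curl}(Ω∞)` determined by polynomials
`p₁, p₂ ∈ ℝ[x,y,z]` and `ρ ∈ ℝ[x,y]`:
`(1+z)^{−(k+1)}·(y(1−y)z·p₁, x(1−x)z·p₂, x(1−x)y(1−y)·ρ)`. -/
def U1curlFun (k : ℕ) (p₁ p₂ : MvPolynomial (Fin 3) ℝ) (ρ : MvPolynomial (Fin 2) ℝ) :
    ℝ × ℝ × ℝ → ℝ × ℝ × ℝ :=
  fun p =>
    ((p.2.1 * (1 - p.2.1) * p.2.2 * MvPolynomial.eval ![p.1, p.2.1, p.2.2] p₁) /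
        (1 + p.2.2) ^ (k + 1),
     (p.1 * (1 - p.1) * p.2.2 * MvPolynomial.eval ![p.1, p.2.1, p.2.2] p₂) /
        (1 + p.2.2) ^ (k + 1),
     (p.1 * (1 - p.1) * p.2.1 * (1 - p.2.1) * MvPolynomial.eval ![p.1, p.2.1] ρ) /
        (1 + p.2.2) ^ (k + 1))

/-- The degree constraints defining `U^{(1),k}_{0,curl}(Ω∞)`:
`p₁` has degree `≤ k−1` in `x`, `≤ k−2` in `y`, `≤ k−2` in `z`; `p₂` has degree `≤ k−2`
in `x`, `≤ k−1` in `y`, `≤ k−2` in `z`; `ρ ∈ Q^{k−2,k−2}[x,y]` (bounds taken in `ℤ`, so a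
negative bound forces the polynomial to vanish). -/
def U1curlBounds (k : ℕ) (p₁ p₂ : MvPolynomial (Fin 3) ℝ)
    (ρ : MvPolynomial (Fin 2) ℝ) : Prop :=
  (∀ d ∈ p₁.support,
    (d 0 : ℤ) ≤ (k : ℤ) - 1 ∧ (d 1 : ℤ) ≤ (k : ℤ) - 2 ∧ (d 2 : ℤ) ≤ (k : ℤ) - 2) ∧
  (∀ d ∈ p₂.support,
    (d 0 : ℤ) ≤ (k : ℤ) - 2 ∧ (d 1 : ℤ) ≤ (k : ℤ) - 1 ∧ (d 2 : ℤ) ≤ (k : ℤ) - 2) ∧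
  (∀ d ∈ ρ.support, (d 0 : ℤ) ≤ (k : ℤ) - 2 ∧ (d 1 : ℤ) ≤ (k : ℤ) - 2)
/-
Fix `(x, y) ∈ (0,1)²`. Along the `z`-line through it, `u₁ = N(z) / (1+z)^(k+1)` with
`N = y(1-y) z p₁(x,y,z)` of degree `≤ k`, while `∂ₓu₃ = c / (1+z)^(k+1)` with `c` independent of
`z`. So the second component of `curl u = 0` becomes, after clearing denominators, the polynomial
ODE `(1+z) N' = (k+1) N + c (1+z)`, whose only solution with `N(0) = 0` and `deg N ≤ k` is
`N = 0`, `c = 0`. This gives `p₁ = 0`, and likewise the first component gives `p₂ = 0`. Finally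
`c = 0` says that `x(1-x) ρ(x,y)` is constant in `x ∈ (0,1)`; it vanishes at `x = 0`, so `ρ = 0`.
-/

open scoped Polynomial
open Polynomial (X C derivative)

namespace MvPolynomial

variable {σ : Type*}

theorem polynomial_eval_aeval {R : Type*} [CommSemiring R] (g : σ → Polynomial R)
    (p : MvPolynomial σ R) (t : R) :
    (aeval g p).eval t = eval (fun i => (g i).eval t) p := by
  rw [← Polynomial.coe_aeval_eq_eval, ← AlgHom.comp_apply, comp_aeval, ← coe_aeval_eq_eval]
  rfl

theorem natDegree_aeval_le {R : Type*} [CommSemiring R] [Fintype σ] (g : σ → Polynomial R)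
    (p : MvPolynomial σ R) {n : ℕ} (h : ∀ d ∈ p.support, ∑ i, d i * (g i).natDegree ≤ n) :
    (aeval g p).natDegree ≤ n := by
  rw [p.as_sum, map_sum]
  refine Polynomial.natDegree_sum_le_of_forall_le _ _ fun d hd => ?_
  rw [aeval_monomial, Finsupp.prod_fintype _ _ (fun i => pow_zero _), Polynomial.algebraMap_eq]
  refine (Polynomial.natDegree_C_mul_le _ _).trans
    ((Polynomial.natDegree_prod_le _ _).trans ((Finset.sum_le_sum fun i _ => ?_).trans (h d hd)))
  exact Polynomial.natDegree_pow_le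

end MvPolynomial

namespace Polynomial

/-- For `n = deg N ≥ 2` the coefficient of `X^n` reads `(n - k - 1) aₙ = 0`, impossible for
`n ≤ k`; so `N = a X`, and evaluating at `-1` gives `a = 0`. -/
theorem eq_zero_of_one_add_X_mul_derivative_eq {K : Type*} [Field K] [CharZero K] {k : ℕ}
    {N : K[X]} {c : K} (hdeg : N.natDegree ≤ k) (h0 : N.eval 0 = 0)
    (h : (1 + X) * derivative N = C ((k : K) + 1) * N + C c * (1 + X)) : N = 0 ∧ c = 0 := by
  have hle : N.natDegree ≤ 1 := by
    by_contra! hlt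
    obtain ⟨m, hm⟩ := Nat.exists_eq_add_of_lt hlt
    have hcoeff := congrArg (coeff · (m + 2)) h
    have hlead : N.coeff (m + 2) ≠ 0 := by
      rw [show m + 2 = N.natDegree by omega, coeff_natDegree, Ne, leadingCoeff_eq_zero]
      rintro rfl; simp at hlt
    simp only [add_mul, one_mul, coeff_add, coeff_derivative,
      coeff_eq_zero_of_natDegree_lt (show N.natDegree < m + 2 + 1 by omega), Nat.cast_add,
      Nat.cast_ofNat, zero_mul, coeff_X_mul, Nat.cast_one, zero_add, map_add, map_natCast, map_one,
      coeff_natCast_mul, coeff_C_mul, coeff_one, Nat.add_eq_zero_iff, OfNat.ofNat_ne_zero,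
      and_false, ↓reduceIte, coeff_X, Nat.right_eq_add, one_ne_zero, add_zero, mul_zero] at hcoeff
    have hcast : ((m + 2 : ℕ) : K) = ((k + 1 : ℕ) : K) := by
      push_cast
      refine mul_left_cancel₀ hlead ?_
      linear_combination hcoeff
    have := Nat.cast_injective hcast
    omega
  have hN : N = C (N.coeff 1) * X := by
    conv_lhs =>
      rw [eq_X_add_C_of_natDegree_le_one hle, coeff_zero_eq_eval_zero, h0, map_zero, add_zero]
  have hroot : N.eval (-1) = 0 := by
    have := congrArg (eval (-1)) h
    simp only [eval_mul, eval_add, eval_one, eval_X, eval_C, add_neg_cancel, zero_mul, mul_zero,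
      add_zero] at this
    exact (mul_eq_zero.mp this.symm).resolve_left (Nat.cast_add_one_ne_zero k)
  have hN0 : N = 0 := by
    rw [hN] at hroot ⊢
    simpa using hroot
  refine ⟨hN0, ?_⟩
  have := congrArg (eval 0) h
  simpa [hN0] using this.symm

theorem eq_zero_of_deriv_div_one_add_pow_eq {k : ℕ} {N : ℝ[X]} {c : ℝ} (hdeg : N.natDegree ≤ k)
    (h0 : N.eval 0 = 0)
    (h : ∀ z > 0, deriv (fun t => N.eval t / (1 + t) ^ (k + 1)) z = c / (1 + z) ^ (k + 1)) :
    N = 0 ∧ c = 0 := by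
  refine eq_zero_of_one_add_X_mul_derivative_eq hdeg h0 (sub_eq_zero.mp ?_)
  refine eq_zero_of_infinite_isRoot _ ((Set.Ioi_infinite 0).mono fun z (hz : 0 < z) => ?_)
  have hz' : 1 + z ≠ 0 := by positivity
  have hden := ((hasDerivAt_id' z).const_add 1).fun_pow (k + 1)
  have hquot := h z hz
  rw [((N.hasDerivAt z).fun_div hden (pow_ne_zero _ hz')).deriv] at hquot
  simp only [Nat.cast_add, Nat.cast_one, add_tsub_cancel_right, mul_one] at hquot
  field_simp at hquot
  simp only [Set.mem_ofPred_eq, IsRoot, eval_sub, eval_mul, eval_add, eval_one, eval_X, eval_C]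
  refine mul_left_cancel₀ (pow_ne_zero k hz') ?_
  rw [pow_succ] at hquot
  linear_combination hquot

end Polynomial

theorem Differentiable.mvPolynomial_eval {𝕜 E σ : Type*} [NontriviallyNormedField 𝕜]
    [NormedAddCommGroup E] [NormedSpace 𝕜 E] {f : E → σ → 𝕜}
    (hf : ∀ i, Differentiable 𝕜 (f · i)) (p : MvPolynomial σ 𝕜) :
    Differentiable 𝕜 fun x => MvPolynomial.eval (f x) p := by
  induction p using MvPolynomial.induction_on with
  | C a => simp
  | add p q hp hq => simpa using hp.fun_add hq
  | mul_X p i hp => simpa using hp.fun_mul (hf i)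

theorem pdx_eq_deriv {f : ℝ × ℝ × ℝ → ℝ} {x y z : ℝ} (hf : DifferentiableAt ℝ f (x, y, z)) :
    pdx f (x, y, z) = deriv (fun t => f (t, y, z)) x :=
  (hf.hasFDerivAt.comp_hasDerivAt x
    ((hasDerivAt_id x).prodMk ((hasDerivAt_const _ _).prodMk (hasDerivAt_const _ _)))).deriv.symm

theorem pdy_eq_deriv {f : ℝ × ℝ × ℝ → ℝ} {x y z : ℝ} (hf : DifferentiableAt ℝ f (x, y, z)) :
    pdy f (x, y, z) = deriv (fun t => f (x, t, z)) y :=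
  (hf.hasFDerivAt.comp_hasDerivAt y
    ((hasDerivAt_const _ _).prodMk ((hasDerivAt_id y).prodMk (hasDerivAt_const _ _)))).deriv.symm

theorem pdz_eq_deriv {f : ℝ × ℝ × ℝ → ℝ} {x y z : ℝ} (hf : DifferentiableAt ℝ f (x, y, z)) :
    pdz f (x, y, z) = deriv (fun t => f (x, y, t)) z :=
  (hf.hasFDerivAt.comp_hasDerivAt z
    ((hasDerivAt_const _ _).prodMk ((hasDerivAt_const _ _).prodMk (hasDerivAt_id z)))).deriv.symm

theorem differentiableAt_U1curlFun (k : ℕ) (p₁ p₂ : MvPolynomial (Fin 3) ℝ)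
    (ρ : MvPolynomial (Fin 2) ℝ) {q : ℝ × ℝ × ℝ} (hq : 1 + q.2.2 ≠ 0) :
    DifferentiableAt ℝ (U1curlFun k p₁ p₂ ρ) q := by
  have h₃ (p : MvPolynomial (Fin 3) ℝ) :
      Differentiable ℝ fun q : ℝ × ℝ × ℝ => MvPolynomial.eval ![q.1, q.2.1, q.2.2] p :=
    .mvPolynomial_eval (by simp [Fin.forall_fin_succ]) p
  have h₂ : Differentiable ℝ fun q : ℝ × ℝ × ℝ => MvPolynomial.eval ![q.1, q.2.1] ρ :=
    .mvPolynomial_eval (by simp [Fin.forall_fin_succ]) ρ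
  unfold U1curlFun
  fun_prop (disch := exact pow_ne_zero _ hq)

open Set

def zSlice (x y : ℝ) (p : MvPolynomial (Fin 3) ℝ) : ℝ[X] :=
  MvPolynomial.aeval ![C x, C y, X] p

theorem eval_zSlice (x y t : ℝ) (p : MvPolynomial (Fin 3) ℝ) :
    (zSlice x y p).eval t = MvPolynomial.eval ![x, y, t] p := by
  rw [zSlice, MvPolynomial.polynomial_eval_aeval]
  congr
  funext i
  fin_cases i <;> simp

theorem natDegree_zSlice_le (x y : ℝ) {p : MvPolynomial (Fin 3) ℝ} {n : ℕ}
    (h : ∀ d ∈ p.support, d 2 ≤ n) : (zSlice x y p).natDegree ≤ n :=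
  MvPolynomial.natDegree_aeval_le _ _ fun d hd => by simpa [Fin.sum_univ_three] using h d hd

theorem eq_zero_of_zSlice_eq_zero {p : MvPolynomial (Fin 3) ℝ}
    (h : ∀ x ∈ Ioo (0 : ℝ) 1, ∀ y ∈ Ioo (0 : ℝ) 1, zSlice x y p = 0) : p = 0 := by
  refine MvPolynomial.funext_set ![Ioo 0 1, Ioo 0 1, univ]
    (by simp [Fin.forall_fin_succ, Ioo_infinite, infinite_univ]) fun v hv => ?_
  have hv' : v = ![v 0, v 1, v 2] := (FinVec.etaExpand_eq v).symm
  rw [hv', ← eval_zSlice, h _ (hv 0 trivial) _ (hv 1 trivial), Polynomial.eval_zero, map_zero]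

theorem zSlice_eq_zero_of_deriv_eq {k : ℕ} (hk : 1 ≤ k) {p : MvPolynomial (Fin 3) ℝ}
    (hp : ∀ d ∈ p.support, d 2 < k) {a x y c : ℝ} (ha : a ≠ 0)
    (h : ∀ z > 0, deriv (fun t => (C a * X * zSlice x y p).eval t / (1 + t) ^ (k + 1)) z =
      c / (1 + z) ^ (k + 1)) :
    zSlice x y p = 0 ∧ c = 0 := by
  have hdeg : (C a * X * zSlice x y p).natDegree ≤ k := by
    have := natDegree_zSlice_le x y (n := k - 1) fun d hd => Nat.le_sub_one_of_lt (hp d hd)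
    have := Polynomial.natDegree_C_mul_X a ha
    refine Polynomial.natDegree_mul_le.trans ?_
    omega
  obtain ⟨hN, hc⟩ := Polynomial.eq_zero_of_deriv_div_one_add_pow_eq hdeg (by simp) h
  exact ⟨by simpa [ha, Polynomial.X_ne_zero] using hN, hc⟩

theorem eq_zero_of_deriv_mul_one_sub_eq_zero {g : ℝ → ℝ} (hg : Differentiable ℝ g)
    (h : ∀ x ∈ Ioo (0 : ℝ) 1, deriv (fun t => t * (1 - t) * g t) x = 0) :
    ∀ x ∈ Ioo (0 : ℝ) 1, g x = 0 := by
  intro x hx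
  have := hg.continuous
  obtain ⟨ξ, hξ, hslope⟩ := exists_deriv_eq_slope (fun t => t * (1 - t) * g t) hx.1
    (by fun_prop : Continuous fun t => t * (1 - t) * g t).continuousOn
    (by fun_prop : Differentiable ℝ fun t => t * (1 - t) * g t).differentiableOn
  rw [h ξ ⟨hξ.1, hξ.2.trans hx.2⟩] at hslope
  have hx₀ : x ≠ 0 := hx.1.ne'
  have hx₁ : 1 - x ≠ 0 := sub_ne_zero.mpr hx.2.ne'
  field_simp at hslope
  simpa [hx₀, hx₁] using hslope.symm

section U1curl

variable (k : ℕ) (p₁ p₂ : MvPolynomial (Fin 3) ℝ) (ρ : MvPolynomial (Fin 2) ℝ)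

theorem pdz_U1curlFun_fst {x y z : ℝ} (hz : 1 + z ≠ 0) :
    pdz (fun q => (U1curlFun k p₁ p₂ ρ q).1) (x, y, z) =
      deriv (fun t => (C (y * (1 - y)) * X * zSlice x y p₁).eval t / (1 + t) ^ (k + 1)) z := by
  rw [pdz_eq_deriv (differentiableAt_U1curlFun k p₁ p₂ ρ hz).fst]
  congr 1
  funext t
  simp only [U1curlFun, Polynomial.eval_mul, Polynomial.eval_C, Polynomial.eval_X, eval_zSlice]

theorem pdz_U1curlFun_snd_fst {x y z : ℝ} (hz : 1 + z ≠ 0) :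
    pdz (fun q => (U1curlFun k p₁ p₂ ρ q).2.1) (x, y, z) =
      deriv (fun t => (C (x * (1 - x)) * X * zSlice x y p₂).eval t / (1 + t) ^ (k + 1)) z := by
  rw [pdz_eq_deriv (differentiableAt_U1curlFun k p₁ p₂ ρ hz).snd.fst]
  congr 1
  funext t
  simp only [U1curlFun, Polynomial.eval_mul, Polynomial.eval_C, Polynomial.eval_X, eval_zSlice]

theorem pdx_U1curlFun_snd_snd {x y z : ℝ} (hz : 1 + z ≠ 0) :
    pdx (fun q => (U1curlFun k p₁ p₂ ρ q).2.2) (x, y, z) =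
      y * (1 - y) * deriv (fun t => t * (1 - t) * MvPolynomial.eval ![t, y] ρ) x /
        (1 + z) ^ (k + 1) := by
  rw [pdx_eq_deriv (differentiableAt_U1curlFun k p₁ p₂ ρ hz).snd.snd]
  have : (fun t => (U1curlFun k p₁ p₂ ρ (t, y, z)).2.2) =
      fun t => y * (1 - y) / (1 + z) ^ (k + 1) * (t * (1 - t) * MvPolynomial.eval ![t, y] ρ) := by
    funext t
    simp only [U1curlFun]
    ring
  rw [this, deriv_const_mul_field']
  ring

theorem pdy_U1curlFun_snd_snd {x y z : ℝ} (hz : 1 + z ≠ 0) :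
    pdy (fun q => (U1curlFun k p₁ p₂ ρ q).2.2) (x, y, z) =
      x * (1 - x) * deriv (fun t => t * (1 - t) * MvPolynomial.eval ![x, t] ρ) y /
        (1 + z) ^ (k + 1) := by
  rw [pdy_eq_deriv (differentiableAt_U1curlFun k p₁ p₂ ρ hz).snd.snd]
  have : (fun t => (U1curlFun k p₁ p₂ ρ (x, t, z)).2.2) =
      fun t => x * (1 - x) / (1 + z) ^ (k + 1) * (t * (1 - t) * MvPolynomial.eval ![x, t] ρ) := by
    funext t
    simp only [U1curlFun]
    ring
  rw [this, deriv_const_mul_field']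
  ring

variable {k p₁ p₂ ρ} (hk : 1 ≤ k) (hcurl : ∀ p ∈ PyrInfInt, curl3 (U1curlFun k p₁ p₂ ρ) p = 0)
include hk hcurl

theorem zSlice_fst_eq_zero_of_curl3_eq_zero (hp₁ : ∀ d ∈ p₁.support, d 2 < k)
    {x y : ℝ} (hx : x ∈ Ioo 0 1) (hy : y ∈ Ioo 0 1) :
    zSlice x y p₁ = 0 ∧ deriv (fun t => t * (1 - t) * MvPolynomial.eval ![t, y] ρ) x = 0 := by
  have hy' : y * (1 - y) ≠ 0 := mul_ne_zero hy.1.ne' (sub_ne_zero.mpr hy.2.ne')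
  obtain ⟨hslice, hc⟩ := zSlice_eq_zero_of_deriv_eq hk hp₁ hy'
    (c := y * (1 - y) * deriv (fun t => t * (1 - t) * MvPolynomial.eval ![t, y] ρ) x)
    fun z hz => by
      have hz' : 1 + z ≠ 0 := by positivity
      have := (Prod.mk_eq_zero.mp (Prod.mk_eq_zero.mp
        (hcurl (x, y, z) ⟨hx.1, hx.2, hy.1, hy.2, hz⟩)).2).1
      rwa [sub_eq_zero, pdz_U1curlFun_fst k p₁ p₂ ρ hz',
        pdx_U1curlFun_snd_snd k p₁ p₂ ρ hz'] at this
  exact ⟨hslice, (mul_eq_zero.mp hc).resolve_left hy'⟩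

theorem zSlice_snd_eq_zero_of_curl3_eq_zero (hp₂ : ∀ d ∈ p₂.support, d 2 < k)
    {x y : ℝ} (hx : x ∈ Ioo 0 1) (hy : y ∈ Ioo 0 1) : zSlice x y p₂ = 0 := by
  have hx' : x * (1 - x) ≠ 0 := mul_ne_zero hx.1.ne' (sub_ne_zero.mpr hx.2.ne')
  refine (zSlice_eq_zero_of_deriv_eq hk hp₂ hx'
    (c := x * (1 - x) * deriv (fun t => t * (1 - t) * MvPolynomial.eval ![x, t] ρ) y)
    fun z hz => ?_).1
  have hz' : 1 + z ≠ 0 := by positivity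
  have := (Prod.mk_eq_zero.mp (hcurl (x, y, z) ⟨hx.1, hx.2, hy.1, hy.2, hz⟩)).1
  rwa [sub_eq_zero, pdz_U1curlFun_snd_fst k p₁ p₂ ρ hz', pdy_U1curlFun_snd_snd k p₁ p₂ ρ hz',
    eq_comm] at this

end U1curl

/-- the curl operator is injective on `U^{(1),k}_{0,curl}(Ω∞)`: if the curl
of `u = (1+z)^{−(k+1)}·(y(1−y)z·p₁, x(1−x)z·p₂, x(1−x)y(1−y)·ρ)` vanishes on `Ω∞°`,
then `p₁ = 0`, `p₂ = 0` and `ρ = 0`. -/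
theorem curl_injective_on_U1curl (k : ℕ) (hk : 1 ≤ k)
    (p₁ p₂ : MvPolynomial (Fin 3) ℝ) (ρ : MvPolynomial (Fin 2) ℝ)
    (hbounds : U1curlBounds k p₁ p₂ ρ)
    (hcurl : ∀ p ∈ PyrInfInt, curl3 (U1curlFun k p₁ p₂ ρ) p = 0) :
    p₁ = 0 ∧ p₂ = 0 ∧ ρ = 0 := by
  obtain ⟨hb₁, hb₂, -⟩ := hbounds
  have hdeg₁ (d) (hd : d ∈ p₁.support) : d 2 < k := by have := (hb₁ d hd).2.2; omega
  have hdeg₂ (d) (hd : d ∈ p₂.support) : d 2 < k := by have := (hb₂ d hd).2.2; omega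
  have hfst {x y : ℝ} (hx : x ∈ Ioo 0 1) (hy : y ∈ Ioo 0 1) :=
    zSlice_fst_eq_zero_of_curl3_eq_zero hk hcurl hdeg₁ hx hy
  refine ⟨eq_zero_of_zSlice_eq_zero fun x hx y hy => (hfst hx hy).1,
    eq_zero_of_zSlice_eq_zero fun x hx y hy =>
      zSlice_snd_eq_zero_of_curl3_eq_zero hk hcurl hdeg₂ hx hy, ?_⟩
  refine MvPolynomial.funext_set (fun _ => Ioo 0 1) (fun _ => Ioo_infinite zero_lt_one)
    fun v hv => ?_
  have hv' : v = ![v 0, v 1] := (FinVec.etaExpand_eq v).symm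
  rw [hv', map_zero]
  exact eq_zero_of_deriv_mul_one_sub_eq_zero (g := fun t => MvPolynomial.eval ![t, v 1] ρ)
    (.mvPolynomial_eval (by simp [Fin.forall_fin_succ]) ρ)
    (fun x hx => (hfst hx (hv 1 trivial)).2) (v 0) (hv 0 trivial)
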